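/- Moment identity for divergence-form operators: Let σ > 0, let U : ℝ² → ℝ be C¹ and g : ℝ² → ℝ be C², and suppose there is C > 0 such that for all y ∈ ℝ²: U(y)|∇g(y)| ≤ C(1+|y|)^{−2−σ}, |U(y) g(y)| ≤ C(1+|y|)^{−1−σ}, |g(y)||∇U(y)| ≤ C(1+|y|)^{−2−σ}, and |div(U∇g)(y)| ≤ C(1+|y|)^{−3−σ}. Then for i = 1, 2: ∫_{ℝ²} div(U∇g)(y) y_i dy = ∫_{ℝ²} g(y) ∂_{y_i}U(y) dy (both integrals being absolutely convergent). In particular, if div(U∇g) = h on ℝ² and ∫_{ℝ²} h(y) y_i dy = 0, then ∫_{ℝ²} g(y) ∂_{y_i}U(y) dy = 0. -/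

import Mathlib

open MeasureTheory Real

noncomputable section

/-- The Euclidean plane. -/
abbrev E2 : Type := EuclideanSpace ℝ (Fin 2)

/-- The `i`-th partial derivative of `f : ℝ² → ℝ`. -/
noncomputable def pd (i : Fin 2) (f : E2 → ℝ) (y : E2) : ℝ :=
  fderiv ℝ f y (EuclideanSpace.single i 1)

/-- The Laplacian on `ℝ²`. -/
noncomputable def lap (f : E2 → ℝ) (y : E2) : ℝ :=
  pd 0 (pd 0 f) y + pd 1 (pd 1 f) y

/-- The divergence `div (U ∇ g)` on `ℝ²`. -/
noncomputable def divUgrad (U g : E2 → ℝ) (y : E2) : ℝ :=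
  pd 0 (fun z => U z * pd 0 g z) y + pd 1 (fun z => U z * pd 1 g z) y

/-- A radial Liouville pair for the matrix `b`, with decay rates `m 0, m 1 > 2`:
smooth radially symmetric solutions of the Liouville system
`ΔΓⱼ + b_{j1} e^{Γ₁} + b_{j2} e^{Γ₂} = 0` with `Γⱼ(y) = −mⱼ log|y| + O(1)`. -/
structure RadialLiouvillePair (b : Fin 2 → Fin 2 → ℝ) (Γ : Fin 2 → E2 → ℝ)
    (m : Fin 2 → ℝ) : Prop where
  smooth : ∀ j, ContDiff ℝ (⊤ : ℕ∞) (Γ j)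
  radial : ∀ j, ∃ γ : ℝ → ℝ, ∀ y : E2, Γ j y = γ ‖y‖
  system : ∀ (j : Fin 2) (y : E2),
    lap (Γ j) y + b j 0 * Real.exp (Γ 0 y) + b j 1 * Real.exp (Γ 1 y) = 0
  m_gt_two : ∀ j, 2 < m j
  decay : ∃ C₀ > 0, ∀ (j : Fin 2) (y : E2), 1 ≤ ‖y‖ →
    |Γ j y + m j * Real.log ‖y‖| ≤ C₀

/-- `b` is a real symmetric positive definite 2×2 matrix with positive entries. -/
def SymmPosDefPos (b : Fin 2 → Fin 2 → ℝ) : Prop :=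
  (∀ i j, b i j = b j i) ∧ (∀ i j, 0 < b i j) ∧
  (∀ v : Fin 2 → ℝ, v ≠ 0 → 0 < ∑ i, ∑ j, b i j * v i * v j)

lemma abs_coord_le (y : E2) (i : Fin 2) : |y i| ≤ ‖y‖ := by
  have := norm_inner_le_norm (𝕜 := ℝ) (EuclideanSpace.single i (1:ℝ)) y
  simpa [EuclideanSpace.inner_single_left, EuclideanSpace.norm_single] using this

lemma abs_pd_le (f : E2 → ℝ) (j : Fin 2) (y : E2) : |pd j f y| ≤ ‖fderiv ℝ f y‖ := by
  have := (fderiv ℝ f y).le_opNorm (EuclideanSpace.single j (1:ℝ))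
  simpa [pd, EuclideanSpace.norm_single] using this

-- product rule
lemma pd_mul (f h : E2 → ℝ) (j : Fin 2) (y : E2) (hf : DifferentiableAt ℝ f y)
    (hh : DifferentiableAt ℝ h y) :
    pd j (fun z => f z * h z) y = pd j f y * h y + f y * pd j h y := by
  unfold pd
  rw [fderiv_fun_mul hf hh]
  simp only [ContinuousLinearMap.add_apply, ContinuousLinearMap.smul_apply, smul_eq_mul]
  ring

lemma pd_const_mul (c : ℝ) (h : E2 → ℝ) (j : Fin 2) (y : E2) (hh : DifferentiableAt ℝ h y) :
    pd j (fun z => c * h z) y = c * pd j h y := by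
  unfold pd; rw [fderiv_const_mul hh]; simp

lemma pd_sub (f h : E2 → ℝ) (j : Fin 2) (y : E2) (hf : DifferentiableAt ℝ f y)
    (hh : DifferentiableAt ℝ h y) :
    pd j (fun z => f z - h z) y = pd j f y - pd j h y := by
  unfold pd; rw [fderiv_fun_sub hf hh]; simp

lemma pd_coord (i j : Fin 2) (y : E2) :
    pd j (fun z : E2 => z i) y = if j = i then 1 else 0 := by
  have h : (fun z : E2 => z i) = (EuclideanSpace.proj i : E2 →L[ℝ] ℝ) := rfl
  rw [pd, h, ContinuousLinearMap.fderiv]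
  simp [EuclideanSpace.single_apply, eq_comm]

lemma pd_contDiff {n : ℕ∞} (f : E2 → ℝ) (hf : ContDiff ℝ (n+1) f) (j : Fin 2) :
    ContDiff ℝ n (pd j f) := by
  have h : pd j f = (fun L : E2 →L[ℝ] ℝ => L (EuclideanSpace.single j 1)) ∘ (fderiv ℝ f) := rfl
  rw [h]
  exact (ContinuousLinearMap.apply ℝ ℝ (EuclideanSpace.single j 1)).contDiff.comp
    (hf.fderiv_right (le_refl _))

lemma pd_continuous (f : E2 → ℝ) (hf : ContDiff ℝ 1 f) (j : Fin 2) :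
    Continuous (pd j f) := by
  have := pd_contDiff (n := 0) f (by simpa using hf) j
  exact this.continuous

-- scaling
lemma pd_rescale (f : E2 → ℝ) (hf : Differentiable ℝ f) (t : ℝ) (j : Fin 2) (y : E2) :
    pd j (fun z => f (t • z)) y = t * pd j f (t • y) := by
  have h1 : HasFDerivAt (fun z : E2 => t • z) (t • (ContinuousLinearMap.id ℝ E2)) y :=
    (hasFDerivAt_id y).const_smul t
  have h2 : HasFDerivAt (fun z => f (t • z))
      ((fderiv ℝ f (t • y)).comp (t • ContinuousLinearMap.id ℝ E2)) y :=
    ((hf (t • y)).hasFDerivAt).comp y h1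
  rw [pd, h2.fderiv]
  simp [pd, ContinuousLinearMap.comp_apply]

-- integral of a pd of a compactly supported C¹ function is zero
lemma integral_pd_eq_zero (f : E2 → ℝ) (hf : ContDiff ℝ 1 f) (hs : HasCompactSupport f)
    (j : Fin 2) : ∫ y : E2, pd j f y = 0 := by
  have hfd : Differentiable ℝ f := hf.differentiable (by simp)
  have hcont : Continuous fun y => pd j f y := pd_continuous f hf j
  have hsupp : HasCompactSupport fun y => pd j f y := by
    have := (hs.fderiv (𝕜 := ℝ)).comp_left
      (g := fun L : E2 →L[ℝ] ℝ => L (EuclideanSpace.single j 1)) (by simp)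
    exact this
  have hint : Integrable (fun y => pd j f y) := hcont.integrable_of_hasCompactSupport hsupp
  have h := integral_mul_fderiv_eq_neg_fderiv_mul_of_integrable
    (μ := (volume : Measure E2)) (f := f) (g := fun _ => (1:ℝ))
    (v := EuclideanSpace.single j 1) ?_ ?_ ?_ (fun x _ => hfd x) (fun x _ => differentiableAt_const (1:ℝ))
  · simpa [pd] using h.symm
  · simpa [pd] using hint
  · simp
  · simpa using hf.continuous.integrable_of_hasCompactSupport hs

def phi : ContDiffBump (0 : E2) := ⟨1, 2, one_pos, one_lt_two⟩

lemma phi_one {z : E2} (h : ‖z‖ ≤ 1) : phi z = 1 := by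
  apply phi.one_of_mem_closedBall
  simpa [phi] using h

lemma phi_zero {z : E2} (h : 2 ≤ ‖z‖) : phi z = 0 := by
  apply phi.zero_of_le_dist
  simpa [phi] using h

lemma phi_smooth (n : ℕ∞) : ContDiff ℝ n (fun z : E2 => phi z) := ContDiffBump.contDiff phi

lemma phi_nonneg (z : E2) : 0 ≤ phi z := phi.nonneg
lemma phi_le_one (z : E2) : phi z ≤ 1 := phi.le_one

lemma phi_compact_support : HasCompactSupport (fun z : E2 => phi z) := phi.hasCompactSupport
lemma pd_hasCompactSupport (f : E2 → ℝ) (hs : HasCompactSupport f) (j : Fin 2) :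
    HasCompactSupport (pd j f) :=
  (hs.fderiv (𝕜 := ℝ)).comp_left (g := fun L : E2 →L[ℝ] ℝ => L (EuclideanSpace.single j 1))
    (by simp)

lemma bound_pd (f : E2 → ℝ) (hf : ContDiff ℝ 1 f) (hs : HasCompactSupport f) :
    ∃ K, 0 < K ∧ ∀ (j : Fin 2) (z : E2), |pd j f z| ≤ K := by
  have hc : Continuous fun z : E2 => ‖fderiv ℝ f z‖ := (hf.continuous_fderiv (by simp)).norm
  have hcs : HasCompactSupport fun z : E2 => ‖fderiv ℝ f z‖ := (hs.fderiv (𝕜 := ℝ)).norm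
  obtain ⟨K, hK⟩ := hc.bounded_above_of_compact_support hcs
  exact ⟨max K 1, by positivity,
    fun j z => (abs_pd_le f j z).trans (by simpa using ((hK z).trans (le_max_left K 1)))⟩

lemma pd_of_eventually_const (f : E2 → ℝ) (c : ℝ) (j : Fin 2) (y : E2)
    (h : f =ᶠ[nhds y] fun _ => c) : pd j f y = 0 := by
  rw [pd, h.fderiv_eq, fderiv_fun_const]
  simp

lemma eventually_norm_lt {y : E2} {r : ℝ} (h : ‖y‖ < r) : ∀ᶠ z in nhds y, ‖z‖ < r :=
  (continuous_norm.continuousAt).eventually_lt continuousAt_const h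

lemma eventually_norm_gt {y : E2} {r : ℝ} (h : r < ‖y‖) : ∀ᶠ z in nhds y, r < ‖z‖ :=
  (continuousAt_const (y := r)).eventually_lt continuous_norm.continuousAt h

lemma phi_ev_one {y : E2} (h : ‖y‖ < 1) : (fun z : E2 => phi z) =ᶠ[nhds y] fun _ => 1 := by
  filter_upwards [eventually_norm_lt h] with z hz using phi_one hz.le

lemma phi_ev_zero {y : E2} (h : 2 < ‖y‖) : (fun z : E2 => phi z) =ᶠ[nhds y] fun _ => 0 := by
  filter_upwards [eventually_norm_gt h] with z hz using phi_zero hz.le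

lemma pd_phi_zero (j : Fin 2) {y : E2} (h : ‖y‖ < 1 ∨ 2 < ‖y‖) :
    pd j (fun z : E2 => phi z) y = 0 := by
  rcases h with h | h
  · exact pd_of_eventually_const _ 1 j y (phi_ev_one h)
  · exact pd_of_eventually_const _ 0 j y (phi_ev_zero h)

lemma pd_pd_phi_zero (k j : Fin 2) {y : E2} (h : ‖y‖ < 1 ∨ 2 < ‖y‖) :
    pd k (pd j (fun z : E2 => phi z)) y = 0 := by
  apply pd_of_eventually_const _ 0 k y
  rcases h with h | h
  · filter_upwards [(phi_ev_one h).eventually_nhds] with z hz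
    exact pd_of_eventually_const _ 1 j z hz
  · filter_upwards [(phi_ev_zero h).eventually_nhds] with z hz
    exact pd_of_eventually_const _ 0 j z hz

noncomputable def chi (T : ℝ) (y : E2) : ℝ := phi (T⁻¹ • y)

lemma chi_smooth (n : ℕ∞) (T : ℝ) : ContDiff ℝ n (chi T) :=
  (phi_smooth n).comp (contDiff_id.const_smul T⁻¹)

lemma chi_nonneg (T : ℝ) (y : E2) : 0 ≤ chi T y := phi_nonneg _
lemma chi_le_one (T : ℝ) (y : E2) : chi T y ≤ 1 := phi_le_one _

lemma chi_eq_one {T : ℝ} (hT : 0 < T) {y : E2} (h : ‖y‖ ≤ T) : chi T y = 1 := by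
  apply phi_one
  rw [norm_smul, norm_inv, Real.norm_eq_abs, abs_of_pos hT]
  rw [inv_mul_le_iff₀ hT, mul_one]
  exact h

-- scaling lemma from t2 (pd_rescale) gives: pd j (chi T) y = T⁻¹ * pd j phi (T⁻¹ • y)
lemma pd_chi (T : ℝ) (j : Fin 2) (y : E2) :
    pd j (chi T) y = T⁻¹ * pd j (fun z : E2 => phi z) (T⁻¹ • y) :=
  pd_rescale _ ((phi_smooth 1).differentiable (by simp)) T⁻¹ j y

lemma pd_pd_chi (T : ℝ) (k j : Fin 2) (y : E2) :
    pd k (pd j (chi T)) y =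
      T⁻¹ * (T⁻¹ * pd k (pd j (fun z : E2 => phi z)) (T⁻¹ • y)) := by
  have h : pd j (chi T) = fun y => T⁻¹ * pd j (fun z : E2 => phi z) (T⁻¹ • y) :=
    funext fun y => pd_chi T j y
  rw [h]
  have hdiff : Differentiable ℝ (pd j fun z : E2 => phi z) :=
    (pd_contDiff (n := 1) _ (phi_smooth 2) j).differentiable (by simp)
  rw [pd_const_mul _ _ _ _ (by exact (hdiff _).comp y ((differentiable_id.const_smul T⁻¹) y))]
  rw [pd_rescale _ hdiff T⁻¹ k y]

lemma norm_inv_smul {T : ℝ} (hT : 0 < T) (y : E2) : ‖T⁻¹ • y‖ = T⁻¹ * ‖y‖ := by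
  rw [norm_smul, norm_inv, Real.norm_eq_abs, abs_of_pos hT]

lemma pd_chi_zero {T : ℝ} (hT : 0 < T) (j : Fin 2) {y : E2}
    (h : ‖y‖ < T ∨ 2 * T < ‖y‖) : pd j (chi T) y = 0 := by
  rw [pd_chi]
  rw [pd_phi_zero j ?_]; · ring
  rcases h with h | h
  · left; rw [norm_inv_smul hT]
    rw [inv_mul_lt_iff₀ hT, mul_one]; exact h
  · right; rw [norm_inv_smul hT]
    rw [lt_inv_mul_iff₀ hT]; linarith

lemma pd_pd_chi_zero {T : ℝ} (hT : 0 < T) (k j : Fin 2) {y : E2}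
    (h : ‖y‖ < T ∨ 2 * T < ‖y‖) : pd k (pd j (chi T)) y = 0 := by
  rw [pd_pd_chi]
  rw [pd_pd_phi_zero k j ?_]; · ring
  rcases h with h | h
  · left; rw [norm_inv_smul hT, inv_mul_lt_iff₀ hT, mul_one]; exact h
  · right; rw [norm_inv_smul hT, lt_inv_mul_iff₀ hT]; linarith

lemma pd_chi_bound {K T : ℝ} (hT : 0 < T)
    (hK : ∀ (j : Fin 2) (z : E2), |pd j (fun z : E2 => phi z) z| ≤ K)
    (j : Fin 2) (y : E2) : |pd j (chi T) y| ≤ T⁻¹ * K := by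
  rw [pd_chi, abs_mul, abs_of_pos (inv_pos.mpr hT)]
  exact mul_le_mul_of_nonneg_left (hK j _) (inv_pos.mpr hT).le

lemma pd_pd_chi_bound {K T : ℝ} (hT : 0 < T)
    (hK : ∀ (k j : Fin 2) (z : E2), |pd k (pd j (fun z : E2 => phi z)) z| ≤ K)
    (k j : Fin 2) (y : E2) : |pd k (pd j (chi T)) y| ≤ T⁻¹ * (T⁻¹ * K) := by
  rw [pd_pd_chi, abs_mul, abs_mul, abs_of_pos (inv_pos.mpr hT)]
  have h0 := (inv_pos.mpr hT).le
  exact mul_le_mul_of_nonneg_left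
    (mul_le_mul_of_nonneg_left (hK k j (T⁻¹ • y)) h0) h0

lemma integrable_of_decay (f : E2 → ℝ) (hm : AEStronglyMeasurable f (volume : Measure E2))
    (c a : ℝ) (ha : 2 < a) (hb : ∀ y, |f y| ≤ c * (1 + ‖y‖) ^ (-a)) :
    Integrable f (volume : Measure E2) := by
  have h2 : ((Module.finrank ℝ E2 : ℝ)) < a := by
    rw [finrank_euclideanSpace_fin]; exact_mod_cast ha
  have := (integrable_one_add_norm (E := E2) (μ := volume) h2).const_mul c
  exact this.mono' hm (Filter.Eventually.of_forall fun y => by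
    simpa [Real.norm_eq_abs] using hb y)

lemma coord_differentiableAt (i : Fin 2) (y : E2) :
    DifferentiableAt ℝ (fun z : E2 => z i) y :=
  (EuclideanSpace.proj (𝕜 := ℝ) i).differentiableAt

lemma pdA (U g : E2 → ℝ) (hU : ContDiff ℝ 1 U) (hg : ContDiff ℝ 2 g) (T c : ℝ)
    (i j : Fin 2) (y : E2) :
    pd j (fun z => chi T z * (U z * pd j g z * z i - c * (U z * g z))) y
    = pd j (chi T) y * (U y * pd j g y * y i - c * (U y * g y))
      + chi T y * ((pd j (fun z => U z * pd j g z) y * y i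
                    + U y * pd j g y * (if j = i then 1 else 0))
                   - c * (pd j U y * g y + U y * pd j g y)) := by
  have dχ : DifferentiableAt ℝ (chi T) y := ((chi_smooth 1 T).differentiable (by simp)) y
  have dU' : DifferentiableAt ℝ U y := hU.differentiable (by simp) y
  have dg' : DifferentiableAt ℝ g y := (hg.differentiable (by norm_num)) y
  have dpg : DifferentiableAt ℝ (pd j g) y :=
    ((pd_contDiff (n := 1) g (by exact_mod_cast hg) j).differentiable (by simp)) y
  have dci := coord_differentiableAt i y
  have d1 : DifferentiableAt ℝ (fun z => U z * pd j g z) y := dU'.mul dpg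
  have d2 : DifferentiableAt ℝ (fun z => U z * pd j g z * z i) y := d1.mul dci
  have d3 : DifferentiableAt ℝ (fun z => U z * g z) y := dU'.mul dg'
  have d4 : DifferentiableAt ℝ (fun z => c * (U z * g z)) y := d3.const_mul c
  rw [pd_mul _ _ j y dχ (show DifferentiableAt ℝ (fun z => U z * pd j g z * z i - c * (U z * g z)) y from d2.sub d4), pd_sub _ _ j y d2 d4,
    pd_mul _ _ j y d1 dci, pd_coord i j y, pd_const_mul c _ j y d3,
    pd_mul _ _ j y dU' dg']

lemma pdB (U g : E2 → ℝ) (hU : ContDiff ℝ 1 U) (hg : ContDiff ℝ 2 g) (T : ℝ)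
    (i j : Fin 2) (y : E2) :
    pd j (fun z => U z * (pd j (chi T) z * z i) * g z) y
    = (pd j U y * (pd j (chi T) y * y i)
       + U y * (pd j (pd j (chi T)) y * y i
                + pd j (chi T) y * (if j = i then 1 else 0))) * g y
      + U y * (pd j (chi T) y * y i) * pd j g y := by
  have dU' : DifferentiableAt ℝ U y := hU.differentiable (by simp) y
  have dg' : DifferentiableAt ℝ g y := (hg.differentiable (by norm_num)) y
  have dpχ : DifferentiableAt ℝ (pd j (chi T)) y :=
    ((pd_contDiff (n := 1) (chi T) (chi_smooth 2 T) j).differentiable (by simp)) y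
  have dci := coord_differentiableAt i y
  have d1 : DifferentiableAt ℝ (fun z => pd j (chi T) z * z i) y := dpχ.mul dci
  have d2 : DifferentiableAt ℝ (fun z => U z * (pd j (chi T) z * z i)) y := dU'.mul d1
  rw [pd_mul _ _ j y d2 dg', pd_mul _ _ j y dU' d1, pd_mul _ _ j y dpχ dci,
    pd_coord i j y]

lemma chi_eq_zero {T : ℝ} (hT : 0 < T) {y : E2} (h : 2 * T ≤ ‖y‖) : chi T y = 0 := by
  apply phi_zero
  rw [norm_inv_smul hT, le_inv_mul_iff₀ hT]
  linarith

lemma chi_hasCompactSupport {T : ℝ} (hT : 0 < T) : HasCompactSupport (chi T) := by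
  apply HasCompactSupport.intro (isCompact_closedBall (0 : E2) (2 * T))
  intro y hy
  rw [Metric.mem_closedBall, dist_zero_right, not_le] at hy
  exact chi_eq_zero hT hy.le

/-- Moment identity for divergence-form operators:
`∫ div(U∇g) yᵢ dy = ∫ g ∂ᵢU dy` under the stated decay bounds; in particular,
first-moment orthogonality of `h = div(U∇g)` gives `∫ g ∂ᵢU dy = 0`. -/
theorem stmt_9 (σ : ℝ) (hσ : 0 < σ) (U g : E2 → ℝ)
    (hU : ContDiff ℝ 1 U) (hg : ContDiff ℝ 2 g) (C : ℝ) (hC : 0 < C)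
    (h1 : ∀ y : E2, U y * ‖fderiv ℝ g y‖ ≤ C * (1 + ‖y‖) ^ (-(2 + σ)))
    (h2 : ∀ y : E2, |U y * g y| ≤ C * (1 + ‖y‖) ^ (-(1 + σ)))
    (h3 : ∀ y : E2, |g y| * ‖fderiv ℝ U y‖ ≤ C * (1 + ‖y‖) ^ (-(2 + σ)))
    (h4 : ∀ y : E2, |divUgrad U g y| ≤ C * (1 + ‖y‖) ^ (-(3 + σ))) :
    ∀ i : Fin 2,
      Integrable (fun y : E2 => divUgrad U g y * y i) ∧
      Integrable (fun y : E2 => g y * pd i U y) ∧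
      (∫ y : E2, divUgrad U g y * y i) = (∫ y : E2, g y * pd i U y) ∧
      (∀ h : E2 → ℝ, (∀ y : E2, divUgrad U g y = h y) →
        (∫ y : E2, h y * y i) = 0 → (∫ y : E2, g y * pd i U y) = 0) := by
  intro i
  -- basic regularity
  have hg2 : ContDiff ℝ ((1 : ℕ∞) + 1) g := by exact_mod_cast hg
  have hg1 : ContDiff ℝ 1 g := hg.of_le (by norm_num)
  have hpgC : ∀ j : Fin 2, ContDiff ℝ 1 (pd j g) := fun j => pd_contDiff (n := 1) g hg2 j
  have hUpg : ∀ j : Fin 2, ContDiff ℝ 1 (fun y => U y * pd j g y) :=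
    fun j => hU.mul (hpgC j)
  have contD : Continuous (divUgrad U g) := by
    have c0 := pd_continuous _ (hUpg 0) 0
    have c1 := pd_continuous _ (hUpg 1) 1
    exact c0.add c1
  have contpdU : ∀ j : Fin 2, Continuous (pd j U) := fun j => pd_continuous U hU j
  have contCoord : Continuous (fun z : E2 => z i) := (EuclideanSpace.proj (𝕜 := ℝ) i).continuous
  have coordCD : ContDiff ℝ 1 (fun z : E2 => z i) := (EuclideanSpace.proj (𝕜 := ℝ) i).contDiff
  have contf₀ : Continuous (fun y : E2 => divUgrad U g y * y i - g y * pd i U y) :=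
    (contD.mul contCoord).sub (hg.continuous.mul (contpdU i))
  -- integrability of the two target integrands
  have int1 : Integrable (fun y : E2 => divUgrad U g y * y i) := by
    apply integrable_of_decay _ ((contD.mul contCoord).aestronglyMeasurable) C (2 + σ)
      (by linarith)
    intro y
    have h0 : (0:ℝ) < 1 + ‖y‖ := by positivity
    calc |divUgrad U g y * y i| = |divUgrad U g y| * |y i| := abs_mul _ _
      _ ≤ (C * (1 + ‖y‖) ^ (-(3 + σ))) * (1 + ‖y‖) :=
          mul_le_mul (h4 y) ((abs_coord_le y i).trans (by linarith)) (abs_nonneg _)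
            (by positivity)
      _ = C * (1 + ‖y‖) ^ (-(2 + σ)) := by
          rw [mul_assoc, show -(2+σ) = -(3+σ) + 1 by ring, Real.rpow_add_one h0.ne']
  have int2 : Integrable (fun y : E2 => g y * pd i U y) := by
    apply integrable_of_decay _ ((hg.continuous.mul (contpdU i)).aestronglyMeasurable) C (2 + σ)
      (by linarith)
    intro y
    calc |g y * pd i U y| = |g y| * |pd i U y| := abs_mul _ _
      _ ≤ |g y| * ‖fderiv ℝ U y‖ :=
          mul_le_mul_of_nonneg_left (abs_pd_le U i y) (abs_nonneg _)
      _ ≤ C * (1 + ‖y‖) ^ (-(2 + σ)) := h3 y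
  have int0 : Integrable (fun y : E2 => divUgrad U g y * y i - g y * pd i U y) := int1.sub int2
  -- bump constants
  obtain ⟨K₁, hK₁pos, hK₁⟩ := bound_pd (fun z : E2 => phi z) (phi_smooth 1) phi_compact_support
  obtain ⟨K₂, hK₂pos, hK₂⟩ := bound_pd (pd 0 (fun z : E2 => phi z))
    (pd_contDiff (n := 1) _ (phi_smooth 2) 0) (pd_hasCompactSupport _ phi_compact_support 0)
  obtain ⟨K₃, hK₃pos, hK₃⟩ := bound_pd (pd 1 (fun z : E2 => phi z))
    (pd_contDiff (n := 1) _ (phi_smooth 2) 1) (pd_hasCompactSupport _ phi_compact_support 1)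
  set K : ℝ := max K₁ (max K₂ K₃) with hKdef
  have hKpos : 0 < K := lt_of_lt_of_le hK₁pos (le_max_left _ _)
  have hKa : ∀ (j : Fin 2) (z : E2), |pd j (fun z : E2 => phi z) z| ≤ K :=
    fun j z => (hK₁ j z).trans (le_max_left _ _)
  have hKb : ∀ (k j : Fin 2) (z : E2), |pd k (pd j (fun z : E2 => phi z)) z| ≤ K := by
    intro k j z
    fin_cases j
    · exact (hK₂ k z).trans ((le_max_left _ _).trans (le_max_right _ _))
    · exact (hK₃ k z).trans ((le_max_right _ _).trans (le_max_right _ _))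
  set V : ℝ := (volume (Metric.ball (0 : E2) 1)).toReal with hVdef
  have hVnn : 0 ≤ V := ENNReal.toReal_nonneg
  set c₁ : ℝ := 40 * (K * (C * V)) with hc₁def
  -- the key estimate
  have claim : ∀ T : ℝ, 1 ≤ T →
      |∫ y : E2, chi T y * (divUgrad U g y * y i - g y * pd i U y)| ≤ c₁ * T ^ (-σ) := by
    intro T hT
    have hT0 : (0:ℝ) < T := lt_of_lt_of_le one_pos hT
    have hpχC : ∀ j : Fin 2, ContDiff ℝ 1 (pd j (chi T)) :=
      fun j => pd_contDiff (n := 1) (chi T) (by exact_mod_cast chi_smooth 2 T) j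
    have contpχ : ∀ j : Fin 2, Continuous (pd j (chi T)) := fun j => (hpχC j).continuous
    have contppχ : ∀ k j : Fin 2, Continuous (pd k (pd j (chi T))) :=
      fun k j => pd_continuous _ (hpχC j) k
    have dpχ : ∀ j : Fin 2, Differentiable ℝ (pd j (chi T)) :=
      fun j => (hpχC j).differentiable (by simp)
    -- the two families of compactly supported C¹ functions
    set A : Fin 2 → E2 → ℝ := fun j z =>
      chi T z * (U z * pd j g z * z i - (if j = i then (1:ℝ) else 0) * (U z * g z)) with hAdef
    set Bf : Fin 2 → E2 → ℝ := fun j z => U z * (pd j (chi T) z * z i) * g z with hBdef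
    have hAcd : ∀ j, ContDiff ℝ 1 (A j) := fun j =>
      (chi_smooth 1 T).mul (((hU.mul (hpgC j)).mul coordCD).sub
        (contDiff_const.mul (hU.mul hg1)))
    have hBcd : ∀ j, ContDiff ℝ 1 (Bf j) := fun j =>
      (hU.mul ((hpχC j).mul coordCD)).mul hg1
    have hAsupp : ∀ j, HasCompactSupport (A j) := by
      intro j
      apply HasCompactSupport.intro (isCompact_closedBall (0 : E2) (2 * T))
      intro y hy
      rw [Metric.mem_closedBall, dist_zero_right, not_le] at hy
      simp only [hAdef]
      rw [chi_eq_zero hT0 hy.le, zero_mul]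
    have hBsupp : ∀ j, HasCompactSupport (Bf j) := by
      intro j
      apply HasCompactSupport.intro (isCompact_closedBall (0 : E2) (2 * T))
      intro y hy
      rw [Metric.mem_closedBall, dist_zero_right, not_le] at hy
      simp only [hBdef]
      rw [pd_chi_zero hT0 j (Or.inr hy)]
      ring
    have hA0 : ∀ j, (∫ y : E2, pd j (A j) y) = 0 :=
      fun j => integral_pd_eq_zero _ (hAcd j) (hAsupp j) j
    have hB0 : ∀ j, (∫ y : E2, pd j (Bf j) y) = 0 :=
      fun j => integral_pd_eq_zero _ (hBcd j) (hBsupp j) j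
    -- auxiliary functions
    set SA : E2 → ℝ := fun y =>
      pd 0 (chi T) y * (U y * pd 0 g y * y i - (if (0:Fin 2) = i then (1:ℝ) else 0) * (U y * g y))
      + pd 1 (chi T) y * (U y * pd 1 g y * y i - (if (1:Fin 2) = i then (1:ℝ) else 0) * (U y * g y))
      with hSAdef
    set SB : E2 → ℝ := fun y =>
      U y * (pd 0 (chi T) y * y i) * pd 0 g y + U y * (pd 1 (chi T) y * y i) * pd 1 g y with hSBdef
    set P : E2 → ℝ := fun y =>
      (pd 0 U y * (pd 0 (chi T) y * y i)
        + U y * (pd 0 (pd 0 (chi T)) y * y i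
                 + pd 0 (chi T) y * (if (0:Fin 2) = i then (1:ℝ) else 0))) * g y
      + (pd 1 U y * (pd 1 (chi T) y * y i)
        + U y * (pd 1 (pd 1 (chi T)) y * y i
                 + pd 1 (chi T) y * (if (1:Fin 2) = i then (1:ℝ) else 0))) * g y with hPdef
    set E1 : E2 → ℝ := fun y => pd i (chi T) y * (U y * g y) with hE1def
    set rho : E2 → ℝ := fun y => P y + E1 y with hrhodef
    -- pointwise identities
    have hQ1 : ∀ y : E2, pd 0 (A 0) y + pd 1 (A 1) y
        = SA y + chi T y * (divUgrad U g y * y i - g y * pd i U y) := by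
      intro y
      simp only [hAdef]
      rw [pdA U g hU hg T _ i 0 y, pdA U g hU hg T _ i 1 y]
      simp only [hSAdef, divUgrad]
      fin_cases i <;> norm_num <;> ring
    have hQ2 : ∀ y : E2, pd 0 (Bf 0) y + pd 1 (Bf 1) y = P y + SB y := by
      intro y
      simp only [hBdef]
      rw [pdB U g hU hg T i 0 y, pdB U g hU hg T i 1 y]
      simp only [hPdef, hSBdef]
      ring
    have hSASB : ∀ y : E2, SA y = SB y - E1 y := by
      intro y
      simp only [hSAdef, hSBdef, hE1def]
      fin_cases i <;> norm_num <;> ring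
    -- integrability of the pieces
    have contUg : Continuous (fun y : E2 => U y * g y) := hU.continuous.mul hg.continuous
    have contSA : Continuous SA := by
      apply Continuous.add
      · exact (contpχ 0).mul (((hU.continuous.mul (hpgC 0).continuous).mul contCoord).sub
          (continuous_const.mul contUg))
      · exact (contpχ 1).mul (((hU.continuous.mul (hpgC 1).continuous).mul contCoord).sub
          (continuous_const.mul contUg))
    have contSB : Continuous SB := by
      apply Continuous.add
      · exact (hU.continuous.mul ((contpχ 0).mul contCoord)).mul (hpgC 0).continuous
      · exact (hU.continuous.mul ((contpχ 1).mul contCoord)).mul (hpgC 1).continuous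
    have contP : Continuous P := by
      apply Continuous.add
      · exact (((contpdU 0).mul ((contpχ 0).mul contCoord)).add
          (hU.continuous.mul (((contppχ 0 0).mul contCoord).add
            ((contpχ 0).mul continuous_const)))).mul hg.continuous
      · exact (((contpdU 1).mul ((contpχ 1).mul contCoord)).add
          (hU.continuous.mul (((contppχ 1 1).mul contCoord).add
            ((contpχ 1).mul continuous_const)))).mul hg.continuous
    have contE1 : Continuous E1 := (contpχ i).mul contUg
    have suppSA : ∀ y : E2, y ∉ Metric.closedBall (0 : E2) (2*T) → SA y = 0 := by
      intro y hy
      rw [Metric.mem_closedBall, dist_zero_right, not_le] at hy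
      simp only [hSAdef]
      rw [pd_chi_zero hT0 0 (Or.inr hy), pd_chi_zero hT0 1 (Or.inr hy)]
      ring
    have suppSB : ∀ y : E2, y ∉ Metric.closedBall (0 : E2) (2*T) → SB y = 0 := by
      intro y hy
      rw [Metric.mem_closedBall, dist_zero_right, not_le] at hy
      simp only [hSBdef]
      rw [pd_chi_zero hT0 0 (Or.inr hy), pd_chi_zero hT0 1 (Or.inr hy)]
      ring
    have suppP : ∀ y : E2, y ∉ Metric.closedBall (0 : E2) (2*T) → P y = 0 := by
      intro y hy
      rw [Metric.mem_closedBall, dist_zero_right, not_le] at hy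
      simp only [hPdef]
      rw [pd_chi_zero hT0 0 (Or.inr hy), pd_chi_zero hT0 1 (Or.inr hy),
        pd_pd_chi_zero hT0 0 0 (Or.inr hy), pd_pd_chi_zero hT0 1 1 (Or.inr hy)]
      ring
    have suppE1 : ∀ y : E2, y ∉ Metric.closedBall (0 : E2) (2*T) → E1 y = 0 := by
      intro y hy
      rw [Metric.mem_closedBall, dist_zero_right, not_le] at hy
      simp only [hE1def]
      rw [pd_chi_zero hT0 i (Or.inr hy)]
      ring
    have intSA : Integrable SA := contSA.integrable_of_hasCompactSupport
      (HasCompactSupport.intro (isCompact_closedBall _ _) suppSA)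
    have intSB : Integrable SB := contSB.integrable_of_hasCompactSupport
      (HasCompactSupport.intro (isCompact_closedBall _ _) suppSB)
    have intP : Integrable P := contP.integrable_of_hasCompactSupport
      (HasCompactSupport.intro (isCompact_closedBall _ _) suppP)
    have intE1 : Integrable E1 := contE1.integrable_of_hasCompactSupport
      (HasCompactSupport.intro (isCompact_closedBall _ _) suppE1)
    have intrho : Integrable rho := by
      simp only [hrhodef]; exact intP.add intE1
    have intchif : Integrable
        (fun y : E2 => chi T y * (divUgrad U g y * y i - g y * pd i U y)) := by
      apply int0.abs.mono' (((chi_smooth 1 T).continuous.mul contf₀).aestronglyMeasurable)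
      apply Filter.Eventually.of_forall
      intro y
      rw [Real.norm_eq_abs, Pi.mul_apply, abs_mul, abs_of_nonneg (chi_nonneg T y)]
      have h01 := chi_le_one T y
      have h00 := chi_nonneg T y
      have := abs_nonneg (divUgrad U g y * y i - g y * pd i U y)
      nlinarith
    have intpdA : ∀ j, Integrable (pd j (A j)) := fun j =>
      (pd_continuous _ (hAcd j) j).integrable_of_hasCompactSupport
        (pd_hasCompactSupport _ (hAsupp j) j)
    have intpdB : ∀ j, Integrable (pd j (Bf j)) := fun j =>
      (pd_continuous _ (hBcd j) j).integrable_of_hasCompactSupport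
        (pd_hasCompactSupport _ (hBsupp j) j)
    -- integral identities
    have eA : (∫ y : E2, (SA y + chi T y * (divUgrad U g y * y i - g y * pd i U y))) = 0 := by
      rw [← integral_congr_ae (Filter.Eventually.of_forall hQ1)]
      rw [integral_add (intpdA 0) (intpdA 1), hA0 0, hA0 1, add_zero]
    have eB : (∫ y : E2, (P y + SB y)) = 0 := by
      rw [← integral_congr_ae (Filter.Eventually.of_forall hQ2)]
      rw [integral_add (intpdB 0) (intpdB 1), hB0 0, hB0 1, add_zero]
    have eA' : (∫ y : E2, SA y)
        + (∫ y : E2, chi T y * (divUgrad U g y * y i - g y * pd i U y)) = 0 := by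
      rw [← integral_add intSA intchif]; exact eA
    have eB' : (∫ y : E2, P y) + (∫ y : E2, SB y) = 0 := by
      rw [← integral_add intP intSB]; exact eB
    have eS : (∫ y : E2, SA y) = (∫ y : E2, SB y) - ∫ y : E2, E1 y := by
      rw [← integral_sub intSB intE1]
      exact integral_congr_ae (Filter.Eventually.of_forall hSASB)
    have erho : (∫ y : E2, rho y) = (∫ y : E2, P y) + ∫ y : E2, E1 y := by
      simp only [hrhodef]; exact integral_add intP intE1
    have hMain : (∫ y : E2, chi T y * (divUgrad U g y * y i - g y * pd i U y))
        = ∫ y : E2, rho y := by linarith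
    -- the estimate of ∫ rho
    have hvollt : volume (Metric.closedBall (0 : E2) (2*T)) < ⊤ := measure_closedBall_lt_top
    have hsupprho : ∀ y : E2, y ∉ Metric.closedBall (0 : E2) (2*T) → rho y = 0 := by
      intro y hy
      simp only [hrhodef]
      rw [suppP y hy, suppE1 y hy, add_zero]
    have hsetint : (∫ y : E2, rho y) = ∫ y in Metric.closedBall (0 : E2) (2*T), rho y :=
      (setIntegral_eq_integral_of_forall_compl_eq_zero hsupprho).symm
    set M : ℝ := 10 * (K * (C * T ^ (-(2+σ)))) with hMdef
    have hMnn : 0 ≤ M := by positivity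
    have hbd : ∀ y ∈ Metric.closedBall (0 : E2) (2*T), ‖rho y‖ ≤ M := by
      intro y hy
      rw [Metric.mem_closedBall, dist_zero_right] at hy
      rw [Real.norm_eq_abs]
      by_cases hyT : ‖y‖ < T
      · have : rho y = 0 := by
          simp only [hrhodef, hPdef, hE1def]
          rw [pd_chi_zero hT0 0 (Or.inl hyT), pd_chi_zero hT0 1 (Or.inl hyT),
            pd_chi_zero hT0 i (Or.inl hyT),
            pd_pd_chi_zero hT0 0 0 (Or.inl hyT), pd_pd_chi_zero hT0 1 1 (Or.inl hyT)]
          ring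
        rw [this, abs_zero]; exact hMnn
      · push_neg at hyT
        have hd2 : |U y * g y| ≤ C * T ^ (-(1+σ)) := by
          refine (h2 y).trans (mul_le_mul_of_nonneg_left ?_ hC.le)
          exact Real.rpow_le_rpow_of_nonpos hT0 (by linarith) (by linarith)
        have hd3 : ∀ j : Fin 2, |g y * pd j U y| ≤ C * T ^ (-(2+σ)) := by
          intro j
          calc |g y * pd j U y| = |g y| * |pd j U y| := abs_mul _ _
            _ ≤ |g y| * ‖fderiv ℝ U y‖ :=
                mul_le_mul_of_nonneg_left (abs_pd_le U j y) (abs_nonneg _)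
            _ ≤ C * (1 + ‖y‖) ^ (-(2+σ)) := h3 y
            _ ≤ C * T ^ (-(2+σ)) := mul_le_mul_of_nonneg_left
                (Real.rpow_le_rpow_of_nonpos hT0 (by linarith) (by linarith)) hC.le
        have hcoord : |y i| ≤ 2*T := (abs_coord_le y i).trans hy
        have hb1 : ∀ j : Fin 2, |pd j (chi T) y| ≤ T⁻¹ * K := fun j => pd_chi_bound hT0 hKa j y
        have hb2 : ∀ k j : Fin 2, |pd k (pd j (chi T)) y| ≤ T⁻¹ * (T⁻¹ * K) :=
          fun k j => pd_pd_chi_bound hT0 hKb k j y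
        have htc : T ^ (-(1+σ)) * T⁻¹ = T ^ (-(2+σ)) := by
          rw [← Real.rpow_neg_one T, ← Real.rpow_add hT0]
          congr 1; ring
        have hrexp : rho y =
            (g y * pd 0 U y) * (pd 0 (chi T) y * y i)
            + (g y * pd 1 U y) * (pd 1 (chi T) y * y i)
            + (U y * g y) * (pd 0 (pd 0 (chi T)) y * y i)
            + (U y * g y) * (pd 1 (pd 1 (chi T)) y * y i)
            + (U y * g y) * (pd 0 (chi T) y * (if (0:Fin 2) = i then (1:ℝ) else 0)
                             + pd 1 (chi T) y * (if (1:Fin 2) = i then (1:ℝ) else 0))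
            + (U y * g y) * pd i (chi T) y := by
          simp only [hrhodef, hPdef, hE1def]; ring
        have b1 : ∀ j : Fin 2, |(g y * pd j U y) * (pd j (chi T) y * y i)|
            ≤ (C * T ^ (-(2+σ))) * ((T⁻¹ * K) * (2*T)) := by
          intro j
          rw [abs_mul (g y * pd j U y) _, abs_mul (pd j (chi T) y) (y i)]
          exact mul_le_mul (hd3 j) (mul_le_mul (hb1 j) hcoord (abs_nonneg _)
            (by positivity)) (by positivity) (by positivity)
        have b3 : ∀ j : Fin 2, |(U y * g y) * (pd j (pd j (chi T)) y * y i)|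
            ≤ (C * T ^ (-(1+σ))) * ((T⁻¹ * (T⁻¹ * K)) * (2*T)) := by
          intro j
          rw [abs_mul (U y * g y) _, abs_mul (pd j (pd j (chi T)) y) (y i)]
          exact mul_le_mul hd2 (mul_le_mul (hb2 j j) hcoord (abs_nonneg _)
            (by positivity)) (by positivity) (by positivity)
        have b5 : |(U y * g y) * (pd 0 (chi T) y * (if (0:Fin 2) = i then (1:ℝ) else 0)
                   + pd 1 (chi T) y * (if (1:Fin 2) = i then (1:ℝ) else 0))|
            ≤ (C * T ^ (-(1+σ))) * (T⁻¹ * K) := by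
          rw [abs_mul]
          refine mul_le_mul hd2 ?_ (abs_nonneg _) (by positivity)
          fin_cases i <;> simp <;> [exact hb1 0; exact hb1 1]
        have b6 : |(U y * g y) * pd i (chi T) y| ≤ (C * T ^ (-(1+σ))) * (T⁻¹ * K) := by
          rw [abs_mul]
          exact mul_le_mul hd2 (hb1 i) (abs_nonneg _) (by positivity)
        have habs : |rho y| ≤
            |(g y * pd 0 U y) * (pd 0 (chi T) y * y i)|
            + |(g y * pd 1 U y) * (pd 1 (chi T) y * y i)|
            + |(U y * g y) * (pd 0 (pd 0 (chi T)) y * y i)|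
            + |(U y * g y) * (pd 1 (pd 1 (chi T)) y * y i)|
            + |(U y * g y) * (pd 0 (chi T) y * (if (0:Fin 2) = i then (1:ℝ) else 0)
                             + pd 1 (chi T) y * (if (1:Fin 2) = i then (1:ℝ) else 0))|
            + |(U y * g y) * pd i (chi T) y| := by
          rw [hrexp]
          exact (abs_add_le _ _).trans (add_le_add ((abs_add_le _ _).trans (add_le_add
            ((abs_add_le _ _).trans (add_le_add ((abs_add_le _ _).trans (add_le_add
              ((abs_add_le _ _)) le_rfl)) le_rfl)) le_rfl)) le_rfl)
        have q1 : (C * T ^ (-(2+σ))) * ((T⁻¹ * K) * (2*T)) = 2 * (K * (C * T ^ (-(2+σ)))) := by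
          field_simp
        have q2 : (C * T ^ (-(1+σ))) * ((T⁻¹ * (T⁻¹ * K)) * (2*T))
            = 2 * (K * (C * T ^ (-(2+σ)))) := by
          rw [← htc]; field_simp
        have q3 : (C * T ^ (-(1+σ))) * (T⁻¹ * K) = K * (C * T ^ (-(2+σ))) := by
          rw [← htc]; ring
        have := b1 0; have := b1 1; have := b3 0; have := b3 1
        rw [hMdef]
        linarith
    have hbound : |∫ y in Metric.closedBall (0 : E2) (2*T), rho y|
        ≤ M * (volume (Metric.closedBall (0 : E2) (2*T))).toReal := by
      have contrho : Continuous rho := by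
        simp only [hrhodef]; exact contP.add contE1
      have := norm_setIntegral_le_of_norm_le_const (μ := volume)
        (s := Metric.closedBall (0 : E2) (2*T)) (C := M) hvollt hbd
      simpa [Real.norm_eq_abs, measureReal_def] using this
    have hvol : (volume (Metric.closedBall (0 : E2) (2*T))).toReal = (2*T)^2 * V := by
      rw [Measure.addHaar_closedBall volume (0 : E2) (by positivity : (0:ℝ) ≤ 2*T)]
      rw [ENNReal.toReal_mul, ENNReal.toReal_ofReal (by positivity)]
      rw [hVdef, finrank_euclideanSpace_fin]
    have hTexp : T ^ (-(2+σ)) * T ^ (2:ℕ) = T ^ (-σ) := by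
      rw [← Real.rpow_natCast T 2, ← Real.rpow_add hT0]
      congr 1; push_cast; ring
    have hfin : M * ((2*T)^2 * V) = c₁ * T ^ (-σ) := by
      rw [hMdef, hc₁def, ← hTexp]; ring
    rw [hMain, hsetint]
    calc |∫ y in Metric.closedBall (0 : E2) (2*T), rho y|
        ≤ M * (volume (Metric.closedBall (0 : E2) (2*T))).toReal := hbound
      _ = M * ((2*T)^2 * V) := by rw [hvol]
      _ = c₁ * T ^ (-σ) := hfin
  -- limiting argument
  have tend1 : Filter.Tendsto (fun n : ℕ => ∫ y : E2, chi n y * (divUgrad U g y * y i - g y * pd i U y))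
      Filter.atTop (nhds (∫ y : E2, (divUgrad U g y * y i - g y * pd i U y))) := by
    apply tendsto_integral_of_dominated_convergence
      (fun y => |divUgrad U g y * y i - g y * pd i U y|)
    · intro n
      exact ((chi_smooth 1 (n:ℝ)).continuous.mul contf₀).aestronglyMeasurable
    · exact int0.abs
    · intro n
      apply Filter.Eventually.of_forall
      intro y
      rw [Real.norm_eq_abs, abs_mul, abs_of_nonneg (chi_nonneg (n:ℝ) y)]
      have h01 := chi_le_one (n:ℝ) y
      have h00 := chi_nonneg (n:ℝ) y
      have h02 := abs_nonneg (divUgrad U g y * y i - g y * pd i U y)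
      nlinarith
    · apply Filter.Eventually.of_forall
      intro y
      have hev : ∀ᶠ n : ℕ in Filter.atTop,
          chi (n:ℝ) y * (divUgrad U g y * y i - g y * pd i U y)
          = divUgrad U g y * y i - g y * pd i U y := by
        filter_upwards [Filter.eventually_ge_atTop (⌈‖y‖⌉₊ + 1)] with n hn
        have h1n : (1:ℕ) ≤ n := le_trans (Nat.le_add_left 1 _) hn
        have hn0 : (0:ℝ) < (n:ℝ) := by exact_mod_cast Nat.lt_of_lt_of_le Nat.zero_lt_one h1n
        have hyn : ‖y‖ ≤ (n:ℝ) := by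
          refine (Nat.le_ceil _).trans ?_
          exact_mod_cast le_trans (Nat.le_succ _) hn
        rw [chi_eq_one hn0 hyn, one_mul]
      exact tendsto_const_nhds.congr' (hev.mono fun n h => h.symm)
  have tend2 : Filter.Tendsto (fun n : ℕ => ∫ y : E2, chi n y * (divUgrad U g y * y i - g y * pd i U y))
      Filter.atTop (nhds 0) := by
    apply squeeze_zero_norm' (a := fun n : ℕ => c₁ * (n:ℝ) ^ (-σ)) ?_ ?_
    · filter_upwards [Filter.eventually_ge_atTop 1] with n hn
      rw [Real.norm_eq_abs]
      exact claim (n:ℝ) (by exact_mod_cast hn)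
    · have h := ((tendsto_rpow_neg_atTop hσ).comp
        (tendsto_natCast_atTop_atTop (R := ℝ))).const_mul c₁
      simpa using h
  have hzero : (∫ y : E2, (divUgrad U g y * y i - g y * pd i U y)) = 0 :=
    tendsto_nhds_unique tend1 tend2
  have heq : (∫ y : E2, divUgrad U g y * y i) = ∫ y : E2, g y * pd i U y := by
    have hsub := integral_sub int1 int2
    rw [hzero] at hsub
    linarith [hsub]
  refine ⟨int1, int2, heq, ?_⟩
  intro h hdiv hm
  have hfe : (fun y : E2 => h y * y i) = fun y : E2 => divUgrad U g y * y i :=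
    funext fun y => by rw [hdiv y]
  rw [← heq, ← hm, hfe]
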